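/- Let 𝓘 : Fin m → Finset ℕ be an abstract network, (T,ι) a contraction tree for 𝓘 of rank r and height H, Λ a feasibility assignment on the leaves of T, ε > 0 a real number, and Λ̂ an ε-simulation of Λ on (T,ι). Assume that every tensor in every set Λ̂(u) has all entries of modulus at most 1, that for every node u, every partial simulation λ̂ of Λ rooted at u, and every node u' of T[u], the tensor λ̂(u') has all entries of modulus at most 1, and that ε·(3·d^{2r}+1)^H ≤ 1. Then for every node u of T and every partial simulation λ̂ of Λ rooted at u, there exists a tensor g ∈ Λ̂(u) with ‖λ̂(u) − g‖ ≤ ε·(3·d^{2r}+1)^{height(u)}, where height(u) denotes the height of the subtree T[u]. -/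

import Mathlib

/-- Rooted binary trees in which every internal node has exactly two children,
with leaves labeled by elements of `α`. -/
inductive BTree (α : Type) : Type
  | leaf (a : α) : BTree α
  | node (l r : BTree α) : BTree α

namespace BTree

variable {α : Type}

/-- The list of leaf labels of a binary tree. -/
def leaves : BTree α → List α
  | leaf a => [a]
  | node l r => l.leaves ++ r.leaves

/-- The height of a binary tree: maximum number of edges on a root-to-leaf path. -/
def height : BTree α → ℕ
  | leaf _ => 0
  | node l r => max l.height r.height + 1

/-- The list of all subtrees (i.e. nodes) of a binary tree. -/
def subtrees : BTree α → List (BTree α)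
  | leaf a => [leaf a]
  | node l r => node l r :: (l.subtrees ++ r.subtrees)

end BTree

/-- An abstract network: every index occurring in the family belongs to exactly
two members of the family. -/
def IsAbstractNetwork {m : ℕ} (I : Fin m → Finset ℕ) : Prop :=
  ∀ i : ℕ, (∃ j : Fin m, i ∈ I j) →
    (Finset.univ.filter fun j : Fin m => i ∈ I j).card = 2

/-- The index set `ι(u)` attached to the node `u` of a contraction tree for `I`. -/
def iota {m : ℕ} (I : Fin m → Finset ℕ) : BTree (Fin m) → Finset ℕ
  | .leaf j => I j
  | .node l r => symmDiff (iota I l) (iota I r)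

/-- `(T, ι)` is a contraction tree for the abstract network `I`: the leaves of `T` are
labeled bijectively with the members of the family, and at every internal node the
index sets of the two children intersect. -/
def IsContractionTree {m : ℕ} (I : Fin m → Finset ℕ) (T : BTree (Fin m)) : Prop :=
  T.leaves.Nodup ∧ (∀ j : Fin m, j ∈ T.leaves) ∧
  ∀ l r : BTree (Fin m), BTree.node l r ∈ T.subtrees →
    ((iota I l) ∩ (iota I r)).Nonempty

/-- The rank of the contraction tree `(T, ι)`: the maximum of `|ι(u)|` over nodes `u`. -/
def rankOf {m : ℕ} (I : Fin m → Finset ℕ) (T : BTree (Fin m)) : ℕ :=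
  (T.subtrees.map fun u => (iota I u).card).foldr max 0

/-- A `d`-state tensor, given by its entries on assignments of a pair of values in
`Fin d` to every possible index; a tensor *with index set* `I` is one whose entries
depend only on the values assigned to the indices in `I` (see `HasIndexSet`). -/
abbrev Tensor (d : ℕ) : Type := (ℕ → Fin d × Fin d) → ℂ

/-- `g` is a tensor with index set `I`: its entries depend only on the indices in `I`. -/
def HasIndexSet {d : ℕ} (g : Tensor d) (I : Finset ℕ) : Prop :=
  ∀ σ τ : ℕ → Fin d × Fin d, (∀ x ∈ I, σ x = τ x) → g σ = g τ

/-- The norm of a tensor: the supremum of the moduli of its entries. -/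
noncomputable def tnorm {d : ℕ} (g : Tensor d) : ℝ := ⨆ σ, ‖g σ‖

/-- The contraction of two tensors over the shared index set `L`. -/
noncomputable def contr {d : ℕ} (L : Finset ℕ) (g g' : Tensor d) : Tensor d :=
  fun σ => ∑ τ : ↥L → Fin d × Fin d,
    g (fun x => if h : x ∈ L then τ ⟨x, h⟩ else σ x) *
    g' (fun x => if h : x ∈ L then τ ⟨x, h⟩ else σ x)

/-- A partial simulation of the feasibility assignment `Λ` rooted at the node `u`:
an assignment of a tensor to each node of the subtree `T[u]` that picks a member of
`Λ` at each leaf and is the contraction of the children's tensors (over their shared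
index set) at each internal node. -/
def IsPartialSim {d m : ℕ} (I : Fin m → Finset ℕ) (Λ : Fin m → Finset (Tensor d))
    (u : BTree (Fin m)) (lam : BTree (Fin m) → Tensor d) : Prop :=
  (∀ j : Fin m, BTree.leaf j ∈ u.subtrees → lam (BTree.leaf j) ∈ Λ j) ∧
  (∀ l r : BTree (Fin m), BTree.node l r ∈ u.subtrees →
    lam (BTree.node l r) = contr ((iota I l) ∩ (iota I r)) (lam l) (lam r))

/-- An `ε`-simulation of the feasibility assignment `Λ` on the contraction tree `T`:
each node carries a finite set of tensors, agreeing with `Λ` at the leaves; at every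
internal node, every tensor of the node is `ε`-close to the contraction of some pair
of tensors of the children, and conversely the contraction of every pair of tensors
of the children is `ε`-close to some tensor of the node. -/
def IsEpsSim {d m : ℕ} (I : Fin m → Finset ℕ) (Λ : Fin m → Finset (Tensor d))
    (T : BTree (Fin m)) (ε : ℝ) (L : BTree (Fin m) → Finset (Tensor d)) : Prop :=
  (∀ j : Fin m, BTree.leaf j ∈ T.subtrees → L (BTree.leaf j) = Λ j) ∧
  (∀ l r : BTree (Fin m), BTree.node l r ∈ T.subtrees →
    (∀ g ∈ L (BTree.node l r), ∃ gl ∈ L l, ∃ gr ∈ L r,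
        tnorm (g - contr ((iota I l) ∩ (iota I r)) gl gr) ≤ ε) ∧
    (∀ gl ∈ L l, ∀ gr ∈ L r, ∃ g ∈ L (BTree.node l r),
        tnorm (g - contr ((iota I l) ∩ (iota I r)) gl gr) ≤ ε))

/-! Induction on the node `u`. At a leaf the ε-simulation contains `lam u` itself. At an
internal node, write `ab - a'b' = (a - a')b + a'(b - b')` in each of the `d^(2|K|)` summands
of the contraction over the shared indices `K`, with `|K| ≤ r`: for tensors bounded by `1`,
errors `δ ≤ ε B^h` at the children, `B = 3d^(2r) + 1`, become at most `2d^(2r)εB^h` after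
contracting, and the ε-simulation adds `ε`, for a total of at most `εB^(h+1)`. -/

open Finset

namespace BTree

variable {α : Type}

lemma mem_subtrees_self (u : BTree α) : u ∈ u.subtrees := by
  cases u <;> simp [subtrees]

lemma mem_subtrees_trans {T u v : BTree α} (hu : u ∈ T.subtrees) (hv : v ∈ u.subtrees) :
    v ∈ T.subtrees := by
  induction T with
  | leaf a =>
    simp only [subtrees, List.mem_singleton] at hu
    rwa [hu] at hv
  | node l r ihl ihr =>
    simp only [subtrees, List.mem_cons, List.mem_append] at hu ⊢
    rcases hu with rfl | hu | hu
    · simpa only [subtrees, List.mem_cons, List.mem_append] using hv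
    · exact Or.inr (Or.inl (ihl hu))
    · exact Or.inr (Or.inr (ihr hu))

lemma left_mem_subtrees_node (l r : BTree α) : l ∈ (node l r).subtrees := by
  simp [subtrees, mem_subtrees_self]

lemma right_mem_subtrees_node (l r : BTree α) : r ∈ (node l r).subtrees := by
  simp [subtrees, mem_subtrees_self]

end BTree

lemma card_iota_le_rankOf {m : ℕ} (I : Fin m → Finset ℕ) {T u : BTree (Fin m)}
    (hu : u ∈ T.subtrees) : #(iota I u) ≤ rankOf I T :=
  List.le_max_of_le' 0 (List.mem_map_of_mem hu) le_rfl

lemma norm_mul_sub_mul_le {R : Type*} [SeminormedRing R] {x x' y y' : R}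
    (hx' : ‖x'‖ ≤ 1) (hy : ‖y‖ ≤ 1) : ‖x * y - x' * y'‖ ≤ ‖x - x'‖ + ‖y - y'‖ := by
  have hsplit : x * y - x' * y' = (x - x') * y + x' * (y - y') := by noncomm_ring
  rw [hsplit]
  refine (norm_add_le _ _).trans (add_le_add ?_ ?_)
  · exact (norm_mul_le _ _).trans (mul_le_of_le_one_right (norm_nonneg _) hy)
  · exact (norm_mul_le _ _).trans (mul_le_of_le_one_left (norm_nonneg _) hx')

namespace Tensor

variable {d : ℕ}

lemma norm_apply_le_tnorm {g : Tensor d} {C : ℝ} (hg : ∀ σ, ‖g σ‖ ≤ C) (σ : ℕ → Fin d × Fin d) :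
    ‖g σ‖ ≤ tnorm g :=
  le_ciSup ⟨C, Set.forall_mem_range.2 hg⟩ σ

lemma tnorm_le {g : Tensor d} {C : ℝ} (hg : ∀ σ, ‖g σ‖ ≤ C) (hC : 0 ≤ C) : tnorm g ≤ C :=
  Real.iSup_le hg hC

lemma card_assignments (K : Finset ℕ) :
    (Fintype.card (K → Fin d × Fin d) : ℝ) = (d : ℝ) ^ (2 * #K) := by
  rw [Fintype.card_fun, Fintype.card_prod, Fintype.card_fin, Fintype.card_coe]
  push_cast
  ring

lemma norm_sum_assignments_le {K : Finset ℕ} {f : (K → Fin d × Fin d) → ℂ} {C : ℝ}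
    (hf : ∀ τ, ‖f τ‖ ≤ C) : ‖∑ τ, f τ‖ ≤ (d : ℝ) ^ (2 * #K) * C := by
  rw [← card_assignments, ← nsmul_eq_mul, ← card_univ]
  exact (norm_sum_le _ _).trans (sum_le_card_nsmul _ _ _ fun τ _ => hf τ)

lemma norm_contr_le {K : Finset ℕ} {g g' : Tensor d} (hg : ∀ σ, ‖g σ‖ ≤ 1)
    (hg' : ∀ σ, ‖g' σ‖ ≤ 1) (σ : ℕ → Fin d × Fin d) :
    ‖contr K g g' σ‖ ≤ (d : ℝ) ^ (2 * #K) := by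
  simpa [contr] using norm_sum_assignments_le (C := 1) fun τ =>
    (norm_mul_le _ _).trans (mul_le_one₀ (hg _) (norm_nonneg _) (hg' _))

lemma norm_contr_sub_contr_le {K : Finset ℕ} {a a' b b' : Tensor d} {δa δb : ℝ}
    (ha' : ∀ σ, ‖a' σ‖ ≤ 1) (hb : ∀ σ, ‖b σ‖ ≤ 1)
    (hδa : ∀ σ, ‖a σ - a' σ‖ ≤ δa) (hδb : ∀ σ, ‖b σ - b' σ‖ ≤ δb) (σ : ℕ → Fin d × Fin d) :
    ‖contr K a b σ - contr K a' b' σ‖ ≤ (d : ℝ) ^ (2 * #K) * (δa + δb) := by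
  rw [contr, contr, ← sum_sub_distrib]
  exact norm_sum_assignments_le fun τ =>
    (norm_mul_sub_mul_le (ha' _) (hb _)).trans (add_le_add (hδa _) (hδb _))

lemma norm_contr_sub_le_of_approx {K : Finset ℕ} {a a' b b' g : Tensor d} {δa δb ε : ℝ}
    (ha' : ∀ σ, ‖a' σ‖ ≤ 1) (hb : ∀ σ, ‖b σ‖ ≤ 1) (hb' : ∀ σ, ‖b' σ‖ ≤ 1)
    (hg : ∀ σ, ‖g σ‖ ≤ 1) (hδa : ∀ σ, ‖a σ - a' σ‖ ≤ δa) (hδb : ∀ σ, ‖b σ - b' σ‖ ≤ δb)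
    (hgε : tnorm (g - contr K a' b') ≤ ε) (σ : ℕ → Fin d × Fin d) :
    ‖contr K a b σ - g σ‖ ≤ (d : ℝ) ^ (2 * #K) * (δa + δb) + ε := by
  have hg_near : ‖g σ - contr K a' b' σ‖ ≤ ε :=
    (norm_apply_le_tnorm (fun τ => (norm_sub_le _ _).trans
      (add_le_add (hg τ) (norm_contr_le ha' hb' τ))) σ).trans hgε
  calc ‖contr K a b σ - g σ‖
      ≤ ‖contr K a b σ - contr K a' b' σ‖ + ‖contr K a' b' σ - g σ‖ :=
        norm_sub_le_norm_sub_add_norm_sub _ _ _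
    _ ≤ (d : ℝ) ^ (2 * #K) * (δa + δb) + ε :=
        add_le_add (norm_contr_sub_contr_le ha' hb hδa hδb σ) (by rwa [norm_sub_rev])

end Tensor

lemma mul_add_add_le_pow_succ {x X ε δl δr : ℝ} {hl hr : ℕ} (hx : 0 ≤ x) (hxX : x ≤ X)
    (hε : 0 ≤ ε) (hδl : δl ≤ ε * (3 * X + 1) ^ hl) (hδr : δr ≤ ε * (3 * X + 1) ^ hr) :
    x * (δl + δr) + ε ≤ ε * (3 * X + 1) ^ (max hl hr + 1) := by
  set P := (3 * X + 1) ^ max hl hr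
  have hB : 1 ≤ 3 * X + 1 := by linarith
  have hP : 1 ≤ P := one_le_pow₀ hB
  have hδ : δl + δr ≤ 2 * (ε * P) := by
    have hPl := pow_le_pow_right₀ hB (le_max_left hl hr)
    have hPr := pow_le_pow_right₀ hB (le_max_right hl hr)
    nlinarith
  calc x * (δl + δr) + ε ≤ X * (2 * (ε * P)) + ε * P := by
        refine add_le_add ((mul_le_mul_of_nonneg_left hδ hx).trans ?_) ?_
        · gcongr
        · exact le_mul_of_one_le_right hε hP
    _ ≤ ε * (P * (3 * X + 1)) := by nlinarith [mul_nonneg hε (zero_le_one.trans hP)]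
    _ = ε * (3 * X + 1) ^ (max hl hr + 1) := by rw [pow_succ]

section Simulation

variable {d m : ℕ} {I : Fin m → Finset ℕ} {Λ : Fin m → Finset (Tensor d)}

lemma IsPartialSim.mono {u v : BTree (Fin m)} {lam : BTree (Fin m) → Tensor d}
    (h : IsPartialSim I Λ u lam) (hv : v ∈ u.subtrees) : IsPartialSim I Λ v lam :=
  ⟨fun j hj => h.1 j (BTree.mem_subtrees_trans hv hj),
    fun l r hlr => h.2 l r (BTree.mem_subtrees_trans hv hlr)⟩

theorem IsEpsSim.exists_mem_forall_norm_sub_le {T : BTree (Fin m)} {ε : ℝ}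
    {L : BTree (Fin m) → Finset (Tensor d)} (hsim : IsEpsSim I Λ T ε L) (hd : 1 ≤ d)
    (hε : 0 ≤ ε) (hL : ∀ u ∈ T.subtrees, ∀ g ∈ L u, ∀ σ, ‖g σ‖ ≤ 1)
    (hlam : ∀ u ∈ T.subtrees, ∀ lam : BTree (Fin m) → Tensor d,
      IsPartialSim I Λ u lam → ∀ v ∈ u.subtrees, ∀ σ, ‖lam v σ‖ ≤ 1)
    {u : BTree (Fin m)} (hu : u ∈ T.subtrees) {lam : BTree (Fin m) → Tensor d}
    (hpart : IsPartialSim I Λ u lam) :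
    ∃ g ∈ L u, ∀ σ, ‖lam u σ - g σ‖ ≤ ε * (3 * (d : ℝ) ^ (2 * rankOf I T) + 1) ^ u.height := by
  induction u with
  | leaf j =>
    refine ⟨lam (.leaf j), ?_, fun σ => by simpa [BTree.height] using hε⟩
    rw [hsim.1 j hu]
    exact hpart.1 j (BTree.mem_subtrees_self _)
  | node l r ihl ihr =>
    have hl := BTree.mem_subtrees_trans hu (BTree.left_mem_subtrees_node l r)
    have hr := BTree.mem_subtrees_trans hu (BTree.right_mem_subtrees_node l r)
    obtain ⟨gl, hgl, hδl⟩ := ihl hl (hpart.mono (BTree.left_mem_subtrees_node l r))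
    obtain ⟨gr, hgr, hδr⟩ := ihr hr (hpart.mono (BTree.right_mem_subtrees_node l r))
    obtain ⟨g, hg, hgε⟩ := (hsim.2 l r hu).2 gl hgl gr hgr
    have hK : (d : ℝ) ^ (2 * #(iota I l ∩ iota I r)) ≤ (d : ℝ) ^ (2 * rankOf I T) :=
      pow_le_pow_right₀ (by exact_mod_cast hd) (Nat.mul_le_mul_left 2
        ((card_le_card inter_subset_left).trans (card_iota_le_rankOf I hl)))
    refine ⟨g, hg, fun σ => ?_⟩
    rw [hpart.2 l r (BTree.mem_subtrees_self _)]
    have hlam_r := hlam _ hu lam hpart r (BTree.right_mem_subtrees_node l r)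
    exact (Tensor.norm_contr_sub_le_of_approx (hL l hl gl hgl) hlam_r (hL r hr gr hgr)
      (hL _ hu g hg) hδl hδr hgε σ).trans
      (mul_add_add_le_pow_succ (by positivity) hK hε le_rfl le_rfl)

end Simulation

theorem statement_11_general
    (d m : ℕ) (hd : 1 ≤ d)
    (I : Fin m → Finset ℕ)
    (T : BTree (Fin m))
    (r : ℕ) (hrank : rankOf I T = r)
    (Λ : Fin m → Finset (Tensor d))
    (ε : ℝ) (hε : 0 < ε)
    (L : BTree (Fin m) → Finset (Tensor d)) (hsim : IsEpsSim I Λ T ε L)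
    (hb1 : ∀ u ∈ T.subtrees, ∀ g ∈ L u, ∀ σ, ‖g σ‖ ≤ 1)
    (hb2 : ∀ u ∈ T.subtrees, ∀ lam : BTree (Fin m) → Tensor d,
      IsPartialSim I Λ u lam → ∀ u2 ∈ u.subtrees, ∀ σ, ‖lam u2 σ‖ ≤ 1) :
    ∀ u ∈ T.subtrees, ∀ lam : BTree (Fin m) → Tensor d, IsPartialSim I Λ u lam →
      ∃ g ∈ L u, tnorm (lam u - g) ≤ ε * (3 * (d : ℝ) ^ (2 * r) + 1) ^ u.height := by
  intro u hu lam hlam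
  subst hrank
  obtain ⟨g, hg, hclose⟩ := hsim.exists_mem_forall_norm_sub_le hd hε.le hb1 hb2 hu hlam
  exact ⟨g, hg, Tensor.tnorm_le hclose (by positivity)⟩

/-- Under the stated boundedness assumptions, for every node `u` of
the contraction tree and every partial simulation `lam` of `Λ` rooted at `u`, some
tensor of the `ε`-simulation at `u` is `ε·(3d^(2r)+1)^height(u)`-close to `lam u`. -/
theorem statement_11
    (d m : ℕ) (hd : 1 ≤ d)
    (I : Fin m → Finset ℕ) (hnet : IsAbstractNetwork I)
    (T : BTree (Fin m)) (hT : IsContractionTree I T)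
    (r H : ℕ) (hrank : rankOf I T = r) (hheight : T.height = H)
    (Λ : Fin m → Finset (Tensor d))
    (hΛ : ∀ j : Fin m, (Λ j).Nonempty ∧ ∀ g ∈ Λ j, HasIndexSet g (I j))
    (ε : ℝ) (hε : 0 < ε)
    (L : BTree (Fin m) → Finset (Tensor d)) (hsim : IsEpsSim I Λ T ε L)
    (hidx : ∀ u ∈ T.subtrees, ∀ g ∈ L u, HasIndexSet g (iota I u))
    (hb1 : ∀ u ∈ T.subtrees, ∀ g ∈ L u, ∀ σ, ‖g σ‖ ≤ 1)
    (hb2 : ∀ u ∈ T.subtrees, ∀ lam : BTree (Fin m) → Tensor d,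
      IsPartialSim I Λ u lam → ∀ u2 ∈ u.subtrees, ∀ σ, ‖lam u2 σ‖ ≤ 1)
    (hsmall : ε * (3 * (d : ℝ) ^ (2 * r) + 1) ^ H ≤ 1) :
    ∀ u ∈ T.subtrees, ∀ lam : BTree (Fin m) → Tensor d, IsPartialSim I Λ u lam →
      ∃ g ∈ L u, tnorm (lam u - g) ≤ ε * (3 * (d : ℝ) ^ (2 * r) + 1) ^ u.height :=
  statement_11_general d m hd I T r hrank Λ ε hε L hsim hb1 hb2
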